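/- Let x_1, …, x_n be real numbers with |x_i| ≥ 1 for all i, and let ε_1, …, ε_n be i.i.d. Rademacher random variables. Then for every Δ > 0 and every closed interval B of radius Δ (i.e., of length 2Δ), P(ε_1 x_1 + ⋯ + ε_n x_n ∈ B) ≤ C_LO · (⌊Δ⌋ + 1) / √n, where C_LO = 2√2·e/π. -/

import Mathlib

open Finset MeasureTheory ProbabilityTheory
open scoped ENNReal symmDiff

/-!
Erdős' argument. Record a sign pattern of `ε` as the set `A` of indices where `ε i = 1`; each
pattern has probability `2⁻ⁿ`, and flipping `A` on the indices with `x i < 0` turns the sum into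
`2 ∑_{i ∈ A} |x i| - ∑ i, |x i|`. So it suffices to count the sets `A` whose `|x|`-weight lies in
an interval of length `Δ`. Cut that interval into `⌊Δ⌋ + 1` half-open pieces of length `1`: since
all weights are `≥ 1`, the sets in one piece form an antichain, and Sperner's theorem bounds each
piece by `C(n, ⌊n/2⌋)`. Finally `C(n, ⌊n/2⌋)² n ≤ 4ⁿ`, by induction on the central binomial
coefficients; this is sharper than the Stirling estimate behind `C_LO`, which is `≥ 1`.
-/

namespace Nat

theorem centralBinom_sq_mul_le (m : ℕ) : centralBinom m ^ 2 * (2 * m + 1) ≤ 16 ^ m := by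
  induction m with
  | zero => simp
  | succ m ih =>
    have hrec := succ_mul_centralBinom_succ m
    have key : (m + 1) ^ 2 * (centralBinom (m + 1) ^ 2 * (2 * (m + 1) + 1))
        ≤ (m + 1) ^ 2 * 16 ^ (m + 1) :=
      calc (m + 1) ^ 2 * (centralBinom (m + 1) ^ 2 * (2 * (m + 1) + 1))
          = 4 * (2 * m + 1) * (2 * m + 3) * (centralBinom m ^ 2 * (2 * m + 1)) := by
            rw [show (m + 1) ^ 2 * (centralBinom (m + 1) ^ 2 * (2 * (m + 1) + 1))
              = ((m + 1) * centralBinom (m + 1)) ^ 2 * (2 * m + 3) by ring, hrec]; ring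
        _ ≤ 4 * (2 * m + 1) * (2 * m + 3) * 16 ^ m := Nat.mul_le_mul_left _ ih
        _ ≤ (m + 1) ^ 2 * 16 * 16 ^ m := Nat.mul_le_mul_right _ (by nlinarith)
        _ = (m + 1) ^ 2 * 16 ^ (m + 1) := by ring
    exact Nat.le_of_mul_le_mul_left key (by positivity)

theorem choose_half_sq_mul_le (n : ℕ) : n.choose (n / 2) ^ 2 * n ≤ 4 ^ n := by
  obtain ⟨m, rfl | rfl⟩ := even_or_odd' n
  · have h := centralBinom_sq_mul_le m
    rw [Nat.mul_div_cancel_left m two_pos, pow_mul, ← centralBinom]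
    norm_num
    nlinarith
  · have h := centralBinom_sq_mul_le m
    have hrec : centralBinom m * (2 * m + 1) = (2 * m + 1).choose m * (m + 1) := by
      rw [centralBinom, choose_mul_succ_eq]; congr 1; omega
    have hhalf : (2 * m + 1) / 2 = m := by omega
    rw [hhalf]
    have key : (m + 1) ^ 2 * ((2 * m + 1).choose m ^ 2 * (2 * m + 1))
        ≤ (m + 1) ^ 2 * 4 ^ (2 * m + 1) :=
      calc (m + 1) ^ 2 * ((2 * m + 1).choose m ^ 2 * (2 * m + 1))
          = (2 * m + 1) ^ 2 * (centralBinom m ^ 2 * (2 * m + 1)) := by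
            rw [show (m + 1) ^ 2 * ((2 * m + 1).choose m ^ 2 * (2 * m + 1))
              = ((2 * m + 1).choose m * (m + 1)) ^ 2 * (2 * m + 1) by ring, ← hrec]; ring
        _ ≤ (2 * m + 1) ^ 2 * 16 ^ m := Nat.mul_le_mul_left _ h
        _ ≤ (m + 1) ^ 2 * 4 * 16 ^ m := Nat.mul_le_mul_right _ (by nlinarith)
        _ = (m + 1) ^ 2 * 4 ^ (2 * m + 1) := by rw [pow_succ 4 (2 * m), pow_mul]; ring
    exact Nat.le_of_mul_le_mul_left key (by positivity)

theorem choose_half_le_two_pow_div_sqrt {n : ℕ} (hn : 0 < n) :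
    (n.choose (n / 2) : ℝ) ≤ 2 ^ n / Real.sqrt n := by
  have hsqrt : 0 < Real.sqrt n := Real.sqrt_pos.2 (by exact_mod_cast hn)
  rw [le_div_iff₀ hsqrt]
  refine le_of_pow_le_pow_left₀ two_ne_zero (by positivity) ?_
  rw [mul_pow, Real.sq_sqrt (Nat.cast_nonneg n), ← pow_mul, mul_comm n 2, pow_mul]
  exact_mod_cast choose_half_sq_mul_le n

end Nat

section LittlewoodOfford

variable {ι : Type*} [Fintype ι] [DecidableEq ι]

theorem isAntichain_sum_mem_Ico {y : ι → ℝ} (hy : ∀ i, 1 ≤ y i) (t : ℝ) :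
    IsAntichain (· ⊆ ·) (({A : Finset ι | ∑ i ∈ A, y i ∈ Set.Ico t (t + 1)} :
      Finset (Finset ι)) : Set (Finset ι)) := by
  intro A hA B hB hne hAB
  simp only [coe_filter, mem_univ, true_and, Set.mem_ofPred_eq, Set.mem_Ico] at hA hB
  have hgap : 1 ≤ ∑ i ∈ B \ A, y i := by
    obtain ⟨j, hj⟩ : (B \ A).Nonempty := sdiff_nonempty.2 fun hBA => hne (hAB.antisymm hBA)
    calc 1 ≤ y j := hy j
      _ ≤ ∑ i ∈ B \ A, y i := single_le_sum (fun i _ => zero_le_one.trans (hy i)) hj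
  have hsplit := sum_sdiff hAB (f := y)
  linarith

theorem card_sum_mem_Ico_le {y : ι → ℝ} (hy : ∀ i, 1 ≤ y i) (t : ℝ) :
    #{A : Finset ι | ∑ i ∈ A, y i ∈ Set.Ico t (t + 1)}
      ≤ (Fintype.card ι).choose (Fintype.card ι / 2) :=
  (isAntichain_sum_mem_Ico hy t).sperner

theorem card_sum_mem_Icc_le {y : ι → ℝ} (hy : ∀ i, 1 ≤ y i) (a Δ : ℝ) :
    #{A : Finset ι | ∑ i ∈ A, y i ∈ Set.Icc a (a + Δ)}
      ≤ (⌊Δ⌋₊ + 1) * (Fintype.card ι).choose (Fintype.card ι / 2) := by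
  have hcover : ({A : Finset ι | ∑ i ∈ A, y i ∈ Set.Icc a (a + Δ)} : Finset (Finset ι)) ⊆
      (range (⌊Δ⌋₊ + 1)).biUnion fun k => {A | ∑ i ∈ A, y i ∈ Set.Ico (a + k) (a + k + 1)} := by
    intro A hA
    simp only [mem_filter, mem_univ, true_and, Set.mem_Icc] at hA
    simp only [mem_biUnion, mem_range, mem_filter, mem_univ, true_and, Set.mem_Ico]
    have h0 : 0 ≤ ∑ i ∈ A, y i - a := by linarith
    refine ⟨⌊∑ i ∈ A, y i - a⌋₊, Nat.lt_succ_of_le (Nat.floor_le_floor (by linarith)), ?_, ?_⟩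
    · linarith [Nat.floor_le h0]
    · linarith [Nat.lt_floor_add_one (∑ i ∈ A, y i - a)]
  calc _ ≤ _ := card_le_card hcover
    _ ≤ ∑ k ∈ range (⌊Δ⌋₊ + 1),
          #{A : Finset ι | ∑ i ∈ A, y i ∈ Set.Ico (a + k) (a + k + 1)} := card_biUnion_le
    _ ≤ ∑ k ∈ range (⌊Δ⌋₊ + 1), (Fintype.card ι).choose (Fintype.card ι / 2) :=
        sum_le_sum fun k _ => card_sum_mem_Ico_le hy _
    _ = _ := by rw [sum_const, card_range, smul_eq_mul]

def signedSum (x : ι → ℝ) (A : Finset ι) : ℝ := ∑ i, if i ∈ A then x i else -x i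

theorem signedSum_eq_two_mul_sum_sub (x : ι → ℝ) (A : Finset ι) :
    signedSum x A = 2 * ∑ i ∈ A, x i - ∑ i, x i := by
  rw [signedSum, ← sum_add_sum_compl A x, sum_ite, sum_neg_distrib]
  simp only [filter_mem_eq_inter, univ_inter, ← compl_eq_univ_sdiff, filter_not]
  ring

theorem signedSum_abs_symmDiff (x : ι → ℝ) (A : Finset ι) :
    signedSum (fun i => |x i|) (A ∆ ({i | x i < 0} : Finset ι)) = signedSum x A := by
  refine sum_congr rfl fun i _ => ?_
  rcases lt_or_ge (x i) 0 with hi | hi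
  · by_cases hA : i ∈ A <;> simp [mem_symmDiff, hA, hi, abs_of_neg hi]
  · by_cases hA : i ∈ A <;> simp [mem_symmDiff, hA, hi.not_gt, abs_of_nonneg hi]

theorem card_signedSum_mem_eq_abs (x : ι → ℝ) (B : Set ℝ) [DecidablePred (· ∈ B)] :
    #{A : Finset ι | signedSum x A ∈ B}
      = #{A : Finset ι | signedSum (fun i => |x i|) A ∈ B} := by
  refine card_nbij' (· ∆ ({i | x i < 0} : Finset ι)) (· ∆ ({i | x i < 0} : Finset ι))
    ?_ ?_ ?_ ?_ <;> intro A hA <;>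
    simp only [coe_filter, mem_univ, true_and, Set.mem_ofPred_eq] at hA ⊢
  · rwa [signedSum_abs_symmDiff]
  · rwa [← signedSum_abs_symmDiff, symmDiff_symmDiff_cancel_right]
  · exact symmDiff_symmDiff_cancel_right _ _
  · exact symmDiff_symmDiff_cancel_right _ _

theorem card_signedSum_mem_Icc_le {x : ι → ℝ} (hx : ∀ i, 1 ≤ |x i|) (c Δ : ℝ) :
    #{A : Finset ι | signedSum x A ∈ Set.Icc (c - Δ) (c + Δ)}
      ≤ (⌊Δ⌋₊ + 1) * (Fintype.card ι).choose (Fintype.card ι / 2) := by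
  set a := (c - Δ + ∑ i, |x i|) / 2
  have hmem : ∀ A : Finset ι, signedSum (fun i => |x i|) A ∈ Set.Icc (c - Δ) (c + Δ) ↔
      ∑ i ∈ A, |x i| ∈ Set.Icc a (a + Δ) := fun A => by
    simp only [signedSum_eq_two_mul_sum_sub, Set.mem_Icc, a]
    constructor <;> rintro ⟨h₁, h₂⟩ <;> constructor <;> linarith
  rw [card_signedSum_mem_eq_abs x (Set.Icc (c - Δ) (c + Δ)), filter_congr fun A _ => hmem A]
  exact card_sum_mem_Icc_le hx a Δ

end LittlewoodOfford

section Rademacher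

variable {Ω : Type*} [MeasurableSpace Ω] {μ : Measure Ω}

theorem ae_eq_one_or_eq_neg_one [IsProbabilityMeasure μ] {X : Ω → ℝ} (hX : Measurable X)
    (h1 : μ {ω | X ω = 1} = 1 / 2) (h2 : μ {ω | X ω = -1} = 1 / 2) :
    ∀ᵐ ω ∂μ, X ω = 1 ∨ X ω = -1 := by
  have hdisj : Disjoint {ω | X ω = 1} {ω | X ω = -1} :=
    Set.disjoint_left.2 fun ω (h : X ω = 1) (h' : X ω = -1) => by norm_num [h] at h'
  have hm : MeasurableSet {ω | X ω = 1 ∨ X ω = -1} :=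
    (hX (measurableSet_singleton 1)).union (hX (measurableSet_singleton (-1)))
  refine (ae_iff_measure_eq hm.nullMeasurableSet).2 ?_
  rw [Set.ofPred_or, measure_union hdisj (hX (measurableSet_singleton _)), h1, h2,
    ENNReal.add_halves, measure_univ]

variable {ι : Type*} [Fintype ι] [DecidableEq ι] {ε : ι → Ω → ℝ}

def signEvent (ε : ι → Ω → ℝ) (A : Finset ι) : Set Ω :=
  ⋂ i, ε i ⁻¹' {if i ∈ A then 1 else -1}

theorem measure_signEvent (hIndep : iIndepFun ε μ)
    (hRad : ∀ i, μ {ω | ε i ω = 1} = 1 / 2 ∧ μ {ω | ε i ω = -1} = 1 / 2) (A : Finset ι) :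
    μ (signEvent ε A) = (1 / 2) ^ Fintype.card ι := by
  rw [signEvent, hIndep.meas_iInter fun i => ⟨_, measurableSet_singleton _, rfl⟩]
  have hi : ∀ i, μ (ε i ⁻¹' {if i ∈ A then 1 else -1}) = 1 / 2 := fun i => by
    split_ifs
    exacts [(hRad i).1, (hRad i).2]
  simp [hi]

theorem measure_sum_mul_mem_le [IsProbabilityMeasure μ] (hmeas : ∀ i, Measurable (ε i))
    (hIndep : iIndepFun ε μ)
    (hRad : ∀ i, μ {ω | ε i ω = 1} = 1 / 2 ∧ μ {ω | ε i ω = -1} = 1 / 2)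
    (x : ι → ℝ) (B : Set ℝ) [DecidablePred (· ∈ B)] :
    μ {ω | ∑ i, ε i ω * x i ∈ B} ≤ #{A | signedSum x A ∈ B} * (1 / 2) ^ Fintype.card ι := by
  classical
  have hsigns : ∀ᵐ ω ∂μ, ∀ i, ε i ω = 1 ∨ ε i ω = -1 :=
    ae_all_iff.2 fun i => ae_eq_one_or_eq_neg_one (hmeas i) (hRad i).1 (hRad i).2
  have hcover : {ω | ∑ i, ε i ω * x i ∈ B} ≤ᵐ[μ]
      (⋃ A ∈ ({A | signedSum x A ∈ B} : Finset (Finset ι)), signEvent ε A : Set Ω) := by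
    filter_upwards [hsigns] with ω hω hB
    set A : Finset ι := {i | ε i ω = 1}
    have hε : ∀ i, ε i ω = if i ∈ A then 1 else -1 := fun i => by
      rcases hω i with h | h <;> simp [A, h]
    refine Set.mem_iUnion₂.2 ⟨A, ?_, Set.mem_iInter.2 fun i => hε i⟩
    have hsum : signedSum x A = ∑ i, ε i ω * x i :=
      sum_congr rfl fun i _ => by rw [hε i]; split_ifs <;> ring
    rw [mem_filter_univ, hsum]
    exact hB
  calc μ {ω | ∑ i, ε i ω * x i ∈ B}
      ≤ μ (⋃ A ∈ ({A | signedSum x A ∈ B} : Finset (Finset ι)), signEvent ε A) :=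
        measure_mono_ae hcover
    _ ≤ ∑ A ∈ ({A | signedSum x A ∈ B} : Finset (Finset ι)), μ (signEvent ε A) :=
        measure_biUnion_finset_le _ _
    _ = _ := by simp only [measure_signEvent hIndep hRad, sum_const, nsmul_eq_mul]

end Rademacher

/-- **Littlewood–Offord bound with explicit constant.** If `|x i| ≥ 1` for all
`i` and `ε_1,…,ε_n` (with `n ≥ 1`) are i.i.d. Rademacher random variables, then for every
`Δ > 0` and every closed interval of radius `Δ` (written `[c−Δ, c+Δ]`),
`P(∑ ε_i x_i ∈ [c−Δ, c+Δ]) ≤ C_LO (⌊Δ⌋+1) / √n`, where `C_LO = 2√2·e/π`. -/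
theorem littlewood_offord_constant
    {Ω : Type*} [MeasurableSpace Ω] (μ : Measure Ω) [IsProbabilityMeasure μ]
    (n : ℕ) (hn : 0 < n) (x : Fin n → ℝ) (hx : ∀ i, 1 ≤ |x i|)
    (ε : Fin n → Ω → ℝ) (hmeas : ∀ i, Measurable (ε i))
    (hIndep : iIndepFun ε μ)
    (hRad : ∀ i, μ {ω | ε i ω = 1} = 1 / 2 ∧ μ {ω | ε i ω = -1} = 1 / 2)
    (Δ : ℝ) (hΔ : 0 < Δ) (c : ℝ) :
    (μ {ω | ∑ i, ε i ω * x i ∈ Set.Icc (c - Δ) (c + Δ)}).toReal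
      ≤ (2 * Real.sqrt 2 * Real.exp 1 / Real.pi) * ((⌊Δ⌋ : ℝ) + 1) / Real.sqrt n := by
  have hprob := measure_sum_mul_mem_le hmeas hIndep hRad x (Set.Icc (c - Δ) (c + Δ))
  have hcount := card_signedSum_mem_Icc_le hx c Δ
  have hbinom := Nat.choose_half_le_two_pow_div_sqrt hn
  have hC : 1 ≤ 2 * Real.sqrt 2 * Real.exp 1 / Real.pi := by
    have := Real.add_one_le_exp 1
    rw [le_div_iff₀ Real.pi_pos]
    nlinarith [Real.pi_le_four, Real.one_le_sqrt.2 one_le_two]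
  rw [Fintype.card_fin] at hprob hcount
  calc (μ {ω | ∑ i, ε i ω * x i ∈ Set.Icc (c - Δ) (c + Δ)}).toReal
      ≤ #{A | signedSum x A ∈ Set.Icc (c - Δ) (c + Δ)} * (1 / 2) ^ n := by
        simpa using ENNReal.toReal_mono (by finiteness) hprob
    _ ≤ (⌊Δ⌋₊ + 1) * n.choose (n / 2) * (1 / 2) ^ n := by gcongr; exact_mod_cast hcount
    _ ≤ ((⌊Δ⌋ : ℝ) + 1) * (2 ^ n / Real.sqrt n) * (1 / 2) ^ n := by
        rw [natCast_floor_eq_intCast_floor hΔ.le]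
        gcongr
    _ = 1 * ((⌊Δ⌋ : ℝ) + 1) / Real.sqrt n := by rw [one_div, inv_pow]; field_simp
    _ ≤ _ := by gcongr
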